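/- arXiv:2111.02965 — 7 statements merged into one kernel-verified Lean document; each statement's English description precedes it below -/
import Mathlib

section
/- Let R be a commutative unital ring and n ≥ 1. Then n lies in the stable range of R (i.e., every unimodular row of length n+1 over R is stable) if and only if for every ideal I ⊆ R, the reduction map from unimodular rows of length n over R to unimodular rows of length n over R/I is surjective. -/
def IsUnimodular {R : Type*} [CommRing R] {n : ℕ} (r : Fin n → R) : Prop :=
  Ideal.span (Set.range r) = ⊤

def IsStable {R : Type*} [CommRing R] {n : ℕ} (r : Fin (n + 1) → R) : Prop :=
  ∃ s : Fin n → R,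
    IsUnimodular (fun i : Fin n => r i.castSucc + s i * r (Fin.last n))

def InStableRange (R : Type*) [CommRing R] (n : ℕ) : Prop :=
  ∀ r : Fin (n + 1) → R, IsUnimodular r → IsStable r

noncomputable def bassStableRank (R : Type*) [CommRing R] : ℕ :=
  sInf {n : ℕ | 1 ≤ n ∧ InStableRange R n}
/-!
A row `(r, a)` is stable exactly when some unimodular row is congruent to `r` modulo `a`.
Given a unimodular row over `R ⧸ I`, lift it to `r` and choose `m ∈ I` making `(r, m)`
unimodular; stability of `(r, m)` then produces the required unimodular lift. Conversely, for a
unimodular `(r, a)` the row `r` is unimodular over `R ⧸ (a)`, and any unimodular lift of it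
witnesses stability.
-/

section

variable {R : Type*} [CommRing R] {n : ℕ}

lemma isUnimodular_iff_exists_sum_mul_eq_one (r : Fin n → R) :
    IsUnimodular r ↔ ∃ c : Fin n → R, ∑ i, c i * r i = 1 := by
  rw [IsUnimodular, Ideal.eq_top_iff_one]
  simp_rw [← smul_eq_mul]
  exact Submodule.mem_span_range_iff_exists_fun R

lemma isStable_iff_exists_isUnimodular_sub_mem_span_last (r : Fin (n + 1) → R) :
    IsStable r ↔ ∃ r' : Fin n → R, IsUnimodular r' ∧
      ∀ i, r' i - r i.castSucc ∈ Ideal.span {r (Fin.last n)} := by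
  simp_rw [Ideal.mem_span_singleton']
  constructor
  · rintro ⟨s, hs⟩
    exact ⟨_, hs, fun i => ⟨s i, by ring⟩⟩
  · rintro ⟨r', hr', hdiff⟩
    choose s hs using hdiff
    refine ⟨s, ?_⟩
    convert hr' using 2 with i
    rw [hs i]
    ring

lemma exists_lift_snoc_isUnimodular {I : Ideal R} {rbar : Fin n → R ⧸ I}
    (hrbar : IsUnimodular rbar) :
    ∃ r : Fin n → R, (∀ i, Ideal.Quotient.mk I (r i) = rbar i) ∧
      ∃ m ∈ I, IsUnimodular (Fin.snoc r m : Fin (n + 1) → R) := by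
  obtain ⟨c, hc⟩ := (isUnimodular_iff_exists_sum_mul_eq_one rbar).mp hrbar
  choose r hr using fun i => Ideal.Quotient.mk_surjective (rbar i)
  choose a ha using fun i => Ideal.Quotient.mk_surjective (c i)
  refine ⟨r, hr, 1 - ∑ i, a i * r i, ?_, ?_⟩
  · rw [← Ideal.Quotient.eq_zero_iff_mem]
    simp [ha, hr, hc]
  · rw [isUnimodular_iff_exists_sum_mul_eq_one]
    refine ⟨Fin.snoc a 1, ?_⟩
    simp only [Fin.sum_univ_castSucc, Fin.snoc_castSucc, Fin.snoc_last, one_mul]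
    ring

lemma isUnimodular_castSucc_mod_span_last {r : Fin (n + 1) → R} (hr : IsUnimodular r) :
    IsUnimodular fun i : Fin n =>
      Ideal.Quotient.mk (Ideal.span {r (Fin.last n)}) (r i.castSucc) := by
  set π := Ideal.Quotient.mk (Ideal.span {r (Fin.last n)})
  obtain ⟨c, hc⟩ := (isUnimodular_iff_exists_sum_mul_eq_one r).mp hr
  rw [isUnimodular_iff_exists_sum_mul_eq_one]
  refine ⟨fun i => π (c i.castSucc), ?_⟩
  have hlast : π (r (Fin.last n)) = 0 :=
    Ideal.Quotient.eq_zero_iff_mem.mpr (Ideal.mem_span_singleton_self _)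
  simpa [Fin.sum_univ_castSucc, hlast] using congrArg π hc

end

theorem stmt0_general {R : Type*} [CommRing R] (n : ℕ) :
    InStableRange R n ↔
      ∀ I : Ideal R, ∀ rbar : Fin n → R ⧸ I, IsUnimodular rbar →
        ∃ r : Fin n → R, IsUnimodular r ∧ ∀ i, Ideal.Quotient.mk I (r i) = rbar i := by
  constructor
  · intro hsr I rbar hrbar
    obtain ⟨r, hr, m, hm, hrm⟩ := exists_lift_snoc_isUnimodular hrbar
    obtain ⟨r', hr', hdiff⟩ :=
      (isStable_iff_exists_isUnimodular_sub_mem_span_last _).mp (hsr _ hrm)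
    refine ⟨r', hr', fun i => ?_⟩
    have hmI : Ideal.span {m} ≤ I := (Ideal.span_singleton_le_iff_mem I).mpr hm
    rw [← hr i, Ideal.Quotient.eq]
    exact hmI (by simpa using hdiff i)
  · intro hlift r hr
    obtain ⟨r', hr', hr'r⟩ := hlift _ _ (isUnimodular_castSucc_mod_span_last hr)
    exact (isStable_iff_exists_isUnimodular_sub_mem_span_last r).mpr
      ⟨r', hr', fun i => Ideal.Quotient.eq.mp (hr'r i)⟩

theorem stmt0 {R : Type*} [CommRing R] (n : ℕ) (hn : 1 ≤ n) :
    InStableRange R n ↔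
      ∀ I : Ideal R, ∀ rbar : Fin n → R ⧸ I, IsUnimodular rbar →
        ∃ r : Fin n → R, IsUnimodular r ∧ ∀ i, Ideal.Quotient.mk I (r i) = rbar i :=
  stmt0_general n
end

section
/- Let R be a commutative unital ring. Then sr(R) ≤ 1 (every unimodular pair (a,b) is stable, i.e., there exists s with a+sb a unit) if and only if for every ideal I ⊆ R the natural group homomorphism R^× → (R/I)^× is surjective. -/
/-!
If `sr(R) ≤ 1` and `ū` is a unit of `R ⧸ I`, lift `ū` and `ū⁻¹` to `a` and `b`; then `ab ≡ 1 mod I`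
and `(a, 1 - ab)` is unimodular, so some `a + s (1 - ab)` is a unit of `R`, and it maps to `ū`.
Conversely, if `(a, b)` is unimodular then `a` is a unit modulo `b`, and any unit of `R` lifting it
has the form `a + s b`.
-/

theorem Ideal.span_pair_eq_top_iff_isCoprime {R : Type*} [CommSemiring R] (a b : R) :
    Ideal.span {a, b} = ⊤ ↔ IsCoprime a b := by
  rw [Ideal.span_insert, Ideal.sup_eq_top_iff_isCoprime]

section

variable {R : Type*} [CommRing R]

theorem IsCoprime.isUnit_quotient_mk {I : Ideal R} {a b : R} (h : IsCoprime a b) (hb : b ∈ I) :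
    IsUnit (Ideal.Quotient.mk I a) := by
  have := h.map (Ideal.Quotient.mk I)
  rwa [Ideal.Quotient.eq_zero_iff_mem.mpr hb, isCoprime_zero_right] at this

theorem exists_isUnit_add_mul_of_surjective_units_map {a b : R} (hab : IsCoprime a b)
    (hsurj : Function.Surjective (Units.map (Ideal.Quotient.mk (Ideal.span {b})).toMonoidHom)) :
    ∃ s : R, IsUnit (a + s * b) := by
  let I := Ideal.span {b}
  obtain ⟨w, hw⟩ := hsurj (hab.isUnit_quotient_mk (Ideal.mem_span_singleton_self b)).unit
  have hwa : Ideal.Quotient.mk I w = Ideal.Quotient.mk I a := congrArg Units.val hw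
  obtain ⟨s, hs⟩ := Ideal.mem_span_singleton'.mp (Ideal.Quotient.eq.mp hwa)
  exact ⟨s, by rw [show a + s * b = w by linear_combination hs]; exact w.isUnit⟩

theorem surjective_units_map_quotient_mk
    (hR : ∀ a b : R, IsCoprime a b → ∃ s : R, IsUnit (a + s * b)) (I : Ideal R) :
    Function.Surjective (Units.map (Ideal.Quotient.mk I).toMonoidHom) := by
  intro u
  obtain ⟨a, ha⟩ := Ideal.Quotient.mk_surjective (u : R ⧸ I)
  obtain ⟨b, hb⟩ := Ideal.Quotient.mk_surjective (↑u⁻¹ : R ⧸ I)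
  have hab : 1 - a * b ∈ I := by
    rw [← Ideal.Quotient.eq_zero_iff_mem, map_sub, map_mul, ha, hb, Units.mul_inv, map_one, sub_self]
  obtain ⟨s, hs⟩ := hR a (1 - a * b) ⟨b, 1, by ring⟩
  refine ⟨hs.unit, Units.ext ?_⟩
  change Ideal.Quotient.mk I (a + s * (1 - a * b)) = u
  rw [map_add, map_mul, Ideal.Quotient.eq_zero_iff_mem.mpr hab, mul_zero, add_zero, ha]

end

theorem stmt1 {R : Type*} [CommRing R] :
    (∀ a b : R, Ideal.span {a, b} = ⊤ → ∃ s : R, IsUnit (a + s * b)) ↔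
      ∀ I : Ideal R,
        Function.Surjective (Units.map (Ideal.Quotient.mk I).toMonoidHom) := by
  simp_rw [Ideal.span_pair_eq_top_iff_isCoprime]
  exact ⟨fun h => surjective_units_map_quotient_mk h,
    fun h _ _ hab => exists_isUnit_add_mul_of_surjective_units_map hab (h _)⟩
end

section
/- Let R be a commutative unital ring and I an ideal contained in the Jacobson radical of R. Then sr(R/I) = sr(R). -/
/-!
Unimodularity and stability of rows are preserved by any ring map. Conversely, let `f` be
surjective with kernel in the Jacobson radical. If `J.map f = ⊤` then `J + ker f = R`, and since
`ker f` lies in every maximal ideal, `J` lies in none, so `J = ⊤`. Hence unimodular rows over the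
target lift to unimodular rows, stabilizing coefficients lift, and the rings `R` and `R/I` have
the same stable ranges `n`.
-/

section

open Function

variable {R S : Type*} [CommRing R] [CommRing S]

theorem Ideal.eq_top_of_map_eq_top_of_ker_le_jacobson {f : R →+* S} (hf : Surjective f)
    (hker : RingHom.ker f ≤ (⊥ : Ideal R).jacobson) {J : Ideal R} (h : J.map f = ⊤) :
    J = ⊤ := by
  have hsup : J ⊔ RingHom.ker f = ⊤ := by
    rw [RingHom.ker_eq_comap_bot, ← Ideal.comap_map_of_surjective f hf, h, Ideal.comap_top]
  by_contra hJ
  obtain ⟨m, hm, hJm⟩ := Ideal.exists_le_maximal J hJ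
  have hker_m : RingHom.ker f ≤ m := hker.trans (sInf_le ⟨bot_le, hm⟩)
  exact hm.ne_top (top_le_iff.mp (hsup ▸ sup_le hJm hker_m))

theorem Ideal.span_range_comp_eq_map (f : R →+* S) {n : ℕ} (r : Fin n → R) :
    Ideal.span (Set.range (f ∘ r)) = (Ideal.span (Set.range r)).map f := by
  rw [Set.range_comp, Ideal.map_span]

theorem IsUnimodular.map (f : R →+* S) {n : ℕ} {r : Fin n → R} (h : IsUnimodular r) :
    IsUnimodular (f ∘ r) := by
  rw [IsUnimodular, Ideal.span_range_comp_eq_map, h, Ideal.map_top]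

theorem IsUnimodular.of_map {f : R →+* S} (hf : Surjective f)
    (hker : RingHom.ker f ≤ (⊥ : Ideal R).jacobson) {n : ℕ} {r : Fin n → R}
    (h : IsUnimodular (f ∘ r)) : IsUnimodular r := by
  rw [IsUnimodular, Ideal.span_range_comp_eq_map] at h
  exact Ideal.eq_top_of_map_eq_top_of_ker_le_jacobson hf hker h

theorem comp_add_mul_last (f : R →+* S) {n : ℕ} (r : Fin (n + 1) → R) (s : Fin n → R) :
    (f ∘ fun i : Fin n => r i.castSucc + s i * r (Fin.last n)) =
      fun i : Fin n => (f ∘ r) i.castSucc + (f ∘ s) i * (f ∘ r) (Fin.last n) := by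
  ext i
  simp

theorem IsStable.map (f : R →+* S) {n : ℕ} {r : Fin (n + 1) → R} (h : IsStable r) :
    IsStable (f ∘ r) := by
  obtain ⟨s, hs⟩ := h
  exact ⟨f ∘ s, comp_add_mul_last f r s ▸ hs.map f⟩

theorem IsStable.of_map {f : R →+* S} (hf : Surjective f)
    (hker : RingHom.ker f ≤ (⊥ : Ideal R).jacobson) {n : ℕ} {r : Fin (n + 1) → R}
    (h : IsStable (f ∘ r)) : IsStable r := by
  obtain ⟨s', hs'⟩ := h
  have hs : f ∘ surjInv hf ∘ s' = s' := funext fun i => surjInv_eq hf (s' i)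
  refine ⟨surjInv hf ∘ s', IsUnimodular.of_map hf hker ?_⟩
  rwa [comp_add_mul_last, hs]

theorem inStableRange_iff_of_surjective {f : R →+* S} (hf : Surjective f)
    (hker : RingHom.ker f ≤ (⊥ : Ideal R).jacobson) (n : ℕ) :
    InStableRange S n ↔ InStableRange R n := by
  refine ⟨fun hS r hr => (hS _ (hr.map f)).of_map hf hker, fun hR r' hr' => ?_⟩
  have hlift : f ∘ surjInv hf ∘ r' = r' := funext fun i => surjInv_eq hf (r' i)
  rw [← hlift] at hr' ⊢
  exact (hR _ (hr'.of_map hf hker)).map f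

theorem bassStableRank_eq_of_surjective {f : R →+* S} (hf : Surjective f)
    (hker : RingHom.ker f ≤ (⊥ : Ideal R).jacobson) :
    bassStableRank S = bassStableRank R := by
  simp only [bassStableRank, inStableRange_iff_of_surjective hf hker]

end

theorem stmt3 {R : Type*} [CommRing R] (I : Ideal R)
    (hI : I ≤ (⊥ : Ideal R).jacobson) :
    bassStableRank (R ⧸ I) = bassStableRank R :=
  bassStableRank_eq_of_surjective Ideal.Quotient.mk_surjective (by rwa [Ideal.mk_ker])
end

section
/- Let R be a commutative unital ring such that for every ideal I ⊆ R the natural map SL₂(R) → SL₂(R/I) is surjective. Then sr(R) ≤ 2, i.e., every unimodular row (a,b,c) of length 3 over R is stable. -/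
/-! Modulo `c` the row `(a, b)` is unimodular, hence the first row of a matrix in
`SL₂(R ⧸ (c))`. A lift of that matrix to `SL₂(R)` has first row `(a + l c, b + m c)` for some
`l, m`, and the first row of a determinant-one matrix is unimodular. -/

namespace Ideal

variable {R : Type*} [CommRing R]

theorem span_pair_eq_top_of_det_eq_one {N : Matrix (Fin 2) (Fin 2) R} (hN : N.det = 1) :
    span {N 0 0, N 0 1} = ⊤ := by
  rw [eq_top_iff_one, mem_span_pair]
  rw [Matrix.det_fin_two] at hN
  exact ⟨N 1 1, -N 1 0, by linear_combination hN⟩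

theorem exists_det_eq_one_of_span_pair_eq_top {a b : R} (h : span {a, b} = ⊤) :
    ∃ M : Matrix (Fin 2) (Fin 2) R, M.det = 1 ∧ M 0 0 = a ∧ M 0 1 = b := by
  obtain ⟨x, y, hxy⟩ := mem_span_pair.mp (h ▸ Submodule.mem_top : (1 : R) ∈ span {a, b})
  exact ⟨!![a, b; -y, x], by rw [Matrix.det_fin_two_of]; linear_combination hxy, rfl, rfl⟩

theorem span_pair_mk_eq_top_of_span_triple_eq_top {a b c : R} (h : span {a, b, c} = ⊤) :
    span {Quotient.mk (span {c}) a, Quotient.mk (span {c}) b} = ⊤ := by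
  have hc : Quotient.mk (span {c}) c = 0 := Quotient.eq_zero_iff_mem.mpr (mem_span_singleton_self c)
  have := congrArg (map (Quotient.mk (span {c}))) h
  rwa [map_span, map_top, Set.image_insert_eq, Set.image_insert_eq, Set.image_singleton, hc,
    Set.pair_comm, Set.insert_comm, span_insert_zero] at this

theorem exists_eq_add_mul_of_mk_eq {x y c : R}
    (h : Quotient.mk (span {c}) x = Quotient.mk (span {c}) y) : ∃ l, x = y + l * c := by
  obtain ⟨l, hl⟩ := mem_span_singleton'.mp (Quotient.eq.mp h)
  exact ⟨l, by linear_combination -hl⟩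

end Ideal

theorem stmt6 {R : Type*} [CommRing R]
    (hlift : ∀ I : Ideal R, ∀ M : Matrix (Fin 2) (Fin 2) (R ⧸ I), M.det = 1 →
      ∃ N : Matrix (Fin 2) (Fin 2) R, N.det = 1 ∧
        ∀ i j, Ideal.Quotient.mk I (N i j) = M i j) :
    ∀ a b c : R, Ideal.span {a, b, c} = ⊤ →
      ∃ l m : R, Ideal.span {a + l * c, b + m * c} = ⊤ := by
  intro a b c h
  obtain ⟨M, hM, hM0, hM1⟩ :=
    Ideal.exists_det_eq_one_of_span_pair_eq_top (Ideal.span_pair_mk_eq_top_of_span_triple_eq_top h)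
  obtain ⟨N, hN, hNM⟩ := hlift _ M hM
  obtain ⟨l, hl⟩ := Ideal.exists_eq_add_mul_of_mk_eq ((hNM 0 0).trans hM0)
  obtain ⟨m, hm⟩ := Ideal.exists_eq_add_mul_of_mk_eq ((hNM 0 1).trans hM1)
  exact ⟨l, m, hl ▸ hm ▸ Ideal.span_pair_eq_top_of_det_eq_one hN⟩
end

section
/- Let R be a commutative unital ring of stable rank 1 (i.e., for every unimodular pair (a,b) there is s ∈ R with a+sb a unit). Then SL₂(R) = E₂(R), i.e., every 2×2 matrix over R of determinant 1 is a product of elementary matrices. -/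
def IsElementary {R : Type*} [CommRing R] {n : ℕ} (M : Matrix (Fin n) (Fin n) R) : Prop :=
  ∃ i j : Fin n, ∃ r : R, i ≠ j ∧ M = 1 + Matrix.single i j r

/-!
Stable rank one lets us move a unit into the top-left corner of `M = !![a, b; c, d]` by the
column operation `M * !![1, 0; s, 1]`. A determinant-one matrix with unit corner `u` factors as
`!![1, 0; c * u⁻¹, 1] * diag(u, u⁻¹) * !![1, u⁻¹ * b; 0, 1]`, and Whitehead's lemma writes
`diag(u, u⁻¹)` as a product of six elementary matrices.
-/

open Matrix

abbrev elementarySubmonoid (n : ℕ) (R : Type*) [CommRing R] : Submonoid (Matrix (Fin n) (Fin n) R) :=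
  Submonoid.closure {E | IsElementary E}

namespace elementarySubmonoid

variable {R : Type*} [CommRing R]

theorem transvection_mem {n : ℕ} {i j : Fin n} (hij : i ≠ j) (r : R) :
    transvection i j r ∈ elementarySubmonoid n R :=
  Submonoid.subset_closure ⟨i, j, r, hij, rfl⟩

theorem upper_mem (r : R) : !![1, r; 0, 1] ∈ elementarySubmonoid 2 R := by
  convert transvection_mem (zero_ne_one : (0 : Fin 2) ≠ 1) r using 1
  ext i j
  fin_cases i <;> fin_cases j <;> simp [transvection]

theorem lower_mem (r : R) : !![1, 0; r, 1] ∈ elementarySubmonoid 2 R := by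
  convert transvection_mem (one_ne_zero : (1 : Fin 2) ≠ 0) r using 1
  ext i j
  fin_cases i <;> fin_cases j <;> simp [transvection]

/-- Whitehead's lemma: `diag(u, u⁻¹) = w(u) * w(-1)` with `w(u) = !![0, u; -u⁻¹, 0]`. -/
theorem diagonal_unit_mem (u : Rˣ) : !![(u : R), 0; 0, ↑u⁻¹] ∈ elementarySubmonoid 2 R := by
  have weyl : !![(u : R), 0; 0, ↑u⁻¹] =
      (!![1, (u : R); 0, 1] * !![1, 0; -(↑u⁻¹ : R), 1] * !![1, (u : R); 0, 1]) *
        (!![1, -1; 0, 1] * !![1, 0; 1, 1] * !![1, -1; 0, 1]) := by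
    simp
  rw [weyl]
  refine mul_mem (mul_mem (mul_mem ?_ ?_) ?_) (mul_mem (mul_mem ?_ ?_) ?_) <;>
    first | exact upper_mem _ | exact lower_mem _

theorem mem_of_det_eq_one_of_isUnit {a b c d : R} (hdet : a * d - b * c = 1) (ha : IsUnit a) :
    !![a, b; c, d] ∈ elementarySubmonoid 2 R := by
  obtain ⟨u, rfl⟩ := ha
  have hd : d = ↑u⁻¹ * (1 + b * c) := by
    rw [← hdet]
    simp [← mul_assoc]
  have factor : !![(u : R), b; c, d] =
      !![1, 0; c * ↑u⁻¹, 1] * !![(u : R), 0; 0, ↑u⁻¹] * !![1, ↑u⁻¹ * b; 0, 1] := by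
    simp only [mul_fin_two]
    ext i j
    fin_cases i <;> fin_cases j <;> simp [hd]
    ring
  rw [factor]
  exact mul_mem (mul_mem (lower_mem _) (diagonal_unit_mem u)) (upper_mem _)

end elementarySubmonoid

open elementarySubmonoid in
theorem stmt8 {R : Type*} [CommRing R]
    (hsr1 : ∀ a b : R, Ideal.span {a, b} = ⊤ → ∃ s : R, IsUnit (a + s * b)) :
    ∀ M : Matrix (Fin 2) (Fin 2) R, M.det = 1 →
      M ∈ Submonoid.closure {E : Matrix (Fin 2) (Fin 2) R | IsElementary E} := by
  intro M hdet
  rw [eta_fin_two M] at hdet ⊢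
  rw [det_fin_two_of] at hdet
  have unimodular : Ideal.span {M 0 0, M 0 1} = ⊤ := by
    rw [Ideal.eq_top_iff_one, Ideal.mem_span_pair]
    exact ⟨M 1 1, -M 1 0, by linear_combination hdet⟩
  obtain ⟨s, hs⟩ := hsr1 _ _ unimodular
  have column_op : !![M 0 0, M 0 1; M 1 0, M 1 1] =
      !![M 0 0 + s * M 0 1, M 0 1; M 1 0 + s * M 1 1, M 1 1] * !![1, 0; -s, 1] := by
    simp [mul_comm s]
  rw [column_op]
  exact mul_mem (mem_of_det_eq_one_of_isUnit (by linear_combination hdet) hs) (lower_mem _)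
end

section
/- The Bass stable rank of ℤ[x] is at most 3: every unimodular row of length 4 over ℤ[x] is stable. -/
/-!
Choose the shifts one entry at a time by prime avoidance: the `k`-th shifted entry is made to
avoid every minimal prime, not containing the last entry `b`, of the ideal generated by the
earlier shifted entries. Then every prime containing the first `k` shifted entries but not `b` has
height at least `k`. A maximal ideal containing all shifted entries of a unimodular row cannot
contain `b`, so over a Noetherian ring of dimension at most `n` a row of length `n + 2` is stable; and
`dim ℤ[x] = dim ℤ + 1 = 2`.
-/

open Ideal

theorem Ideal.exists_add_mul_notMem_of_isAntichain {R : Type*} [CommRing R]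
    {S : Set (Ideal R)} (hS : S.Finite) (hprime : ∀ p ∈ S, p.IsPrime)
    (hanti : IsAntichain (· ≤ ·) S) (a : R) {b : R} (hb : ∀ p ∈ S, b ∉ p) :
    ∃ t, ∀ p ∈ S, a + t * b ∉ p := by
  classical
  -- Take `t` in every `p ∈ S` with `a ∉ p` but in no `p ∈ S` with `a ∈ p`: prime avoidance
  -- provides it, as `S` is an antichain.
  set J := (hS.toFinset.filter (a ∉ ·)).inf id
  obtain ⟨t, htJ, ht⟩ : ∃ t ∈ J, ∀ p ∈ S, a ∈ p → t ∉ p := by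
    by_contra! hcover
    have hsub : (J : Set R) ⊆ ⋃ p ∈ {p ∈ S | a ∈ p}, (p : Set R) := fun t ht ↦ by
      obtain ⟨p, hpS, hap, htp⟩ := hcover t ht
      exact Set.mem_biUnion ⟨hpS, hap⟩ htp
    obtain ⟨p, ⟨hpS, hap⟩, hJp⟩ := ((subset_union_prime_finite (hS.subset (Set.sep_subset _ _))
      ⊥ ⊥ fun p hp _ _ ↦ hprime p hp.1).mp hsub)
    obtain ⟨q, hq, hqp⟩ := ((hprime p hpS).inf_le').mp hJp
    rw [Finset.mem_filter, Set.Finite.mem_toFinset] at hq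
    exact hq.2 (hanti.eq hq.1 hpS hqp ▸ hap)
  refine ⟨t, fun p hpS hmem ↦ ?_⟩
  by_cases hap : a ∈ p
  · have htb : t * b ∈ p := (p.add_mem_iff_right hap).mp hmem
    exact ((hprime p hpS).mem_or_mem htb).elim (ht p hpS hap) (hb p hpS)
  · have htp : t ∈ p :=
      Finset.inf_le (f := id) (Finset.mem_filter.mpr ⟨hS.mem_toFinset.mpr hpS, hap⟩) htJ
    exact hap ((p.add_mem_iff_left (p.mul_mem_right b htp)).mp hmem)

section Noetherian

variable {R : Type*} [CommRing R] [IsNoetherianRing R]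

theorem Ideal.exists_add_mul_le_height (b : R) {n : ℕ} (r : Fin n → R) :
    ∃ t : Fin n → R, ∀ P : Ideal R, P.IsPrime → b ∉ P → (∀ i, r i + t i * b ∈ P) →
      n ≤ P.height := by
  induction n with
  | zero => exact ⟨0, fun P _ _ _ ↦ by simp⟩
  | succ n ih =>
    obtain ⟨t, ht⟩ := ih (Fin.init r)
    set I := span (Set.range fun i ↦ Fin.init r i + t i * b)
    have hfin : {p ∈ I.minimalPrimes | b ∉ p}.Finite :=
      I.finite_minimalPrimes_of_isNoetherianRing.subset (Set.sep_subset _ _)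
    obtain ⟨tₙ, htₙ⟩ := exists_add_mul_notMem_of_isAntichain hfin
      (fun p hp ↦ hp.1.isPrime) ((setOfPred_minimal_antichain _).subset (Set.sep_subset _ _))
      (r (Fin.last n)) (fun p hp ↦ hp.2)
    refine ⟨Fin.snoc t tₙ, fun P hP hbP hrP ↦ ?_⟩
    have hIP : I ≤ P := span_le.mpr <| Set.range_subset_iff.mpr fun i ↦ by
      simpa [Fin.init] using hrP i.castSucc
    obtain ⟨p, hp, hpP⟩ := exists_minimalPrimes_le hIP
    have : p.IsPrime := hp.isPrime
    have hbp : b ∉ p := fun h ↦ hbP (hpP h)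
    have hpP' : p < P := lt_of_le_of_ne hpP fun h ↦
      htₙ p ⟨hp, hbp⟩ (by simpa [h] using hrP (Fin.last n))
    have hnp : (n : ℕ∞) ≤ p.height := ht p this hbp fun i ↦ hp.1.2 (subset_span ⟨i, rfl⟩)
    calc ((n + 1 : ℕ) : ℕ∞) ≤ p.height + 1 := by push_cast; gcongr
      _ ≤ P.height := height_add_one_le_of_lt_of_isPrime hpP'

theorem Ideal.exists_span_add_mul_eq_top_of_ringKrullDim_le {n : ℕ} (hdim : ringKrullDim R ≤ n)
    (r : Fin (n + 2) → R) (hr : span (Set.range r) = ⊤) :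
    ∃ s : Fin (n + 1) → R,
      span (Set.range fun i : Fin (n + 1) ↦ r i.castSucc + s i * r (Fin.last (n + 1))) = ⊤ := by
  set b := r (Fin.last (n + 1))
  obtain ⟨s, hs⟩ := exists_add_mul_le_height b (fun i : Fin (n + 1) ↦ r i.castSucc)
  refine ⟨s, by_contra fun hne ↦ ?_⟩
  obtain ⟨M, hM, hle⟩ := exists_le_maximal _ hne
  have hrM : ∀ i, r i.castSucc + s i * b ∈ M := fun i ↦ hle (subset_span ⟨i, rfl⟩)
  by_cases hbM : b ∈ M
  · refine hM.ne_top (top_le_iff.mp (hr ▸ span_le.mpr (Set.range_subset_iff.mpr fun i ↦ ?_)))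
    induction i using Fin.lastCases with
    | last => exact hbM
    | cast i => exact (M.add_mem_iff_left (M.mul_mem_left _ hbM)).mp (hrM i)
  · have hheight := hs M hM.isPrime hbM hrM
    have : ((n + 1 : ℕ) : WithBot ℕ∞) ≤ n :=
      (WithBot.coe_le_coe.mpr hheight).trans (height_le_ringKrullDim_of_isPrime.trans hdim)
    norm_cast at this
    omega

end Noetherian

theorem stmt10 (r : Fin 4 → Polynomial ℤ)
    (h : Ideal.span (Set.range r) = ⊤) :
    ∃ s : Fin 3 → Polynomial ℤ,
      Ideal.span (Set.range fun i : Fin 3 => r i.castSucc + s i * r (Fin.last 3)) = ⊤ := by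
  have hdim : ringKrullDim (Polynomial ℤ) ≤ (2 : ℕ) := by
    rw [Polynomial.ringKrullDim_of_isNoetherianRing,
      IsPrincipalIdealRing.ringKrullDim_eq_one ℤ Int.not_isField]
    rfl
  exact Ideal.exists_span_add_mul_eq_top_of_ringKrullDim_le hdim r h
end

section
/- Every commutative Artinian ring has stable rank 1: if R is a commutative Artinian ring and (a,b) is a unimodular pair in R, then there exists s ∈ R such that a + sb is a unit. -/
/-!
A commutative Artinian ring has only finitely many maximal ideals, so by the Chinese remainder
theorem we may pick `s` with `s ≡ 1` modulo the maximal ideals containing `a` and `s ≡ 0` modulo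
the others. Modulo a maximal ideal `m`, `a + s * b` is then `b` if `a ∈ m` and `a` otherwise; both
are nonzero since `(a, b)` is unimodular, so `a + s * b` lies in no maximal ideal.
-/

namespace MaximalSpectrum

variable {R : Type*} [CommRing R]

theorem exists_forall_sub_mem_asIdeal [Finite (MaximalSpectrum R)] (x : MaximalSpectrum R → R) :
    ∃ r : R, ∀ m : MaximalSpectrum R, r - x m ∈ m.asIdeal :=
  Ideal.exists_forall_sub_mem_ideal (fun _ _ hne => isCoprime_of_ne hne) x

theorem notMem_or_notMem_of_span_pair_eq_top {a b : R} (h : Ideal.span {a, b} = ⊤)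
    (m : MaximalSpectrum R) : a ∉ m.asIdeal ∨ b ∉ m.asIdeal := by
  by_contra! hab
  refine m.isMaximal.ne_top (top_le_iff.mp ?_)
  rw [← h, Ideal.span_le, Set.insert_subset_iff, Set.singleton_subset_iff]
  exact hab

end MaximalSpectrum

theorem isUnit_of_forall_notMem_maximalSpectrum {R : Type*} [CommRing R] {u : R}
    (hu : ∀ m : MaximalSpectrum R, u ∉ m.asIdeal) : IsUnit u := by
  by_contra h
  obtain ⟨m, hm, hum⟩ := exists_max_ideal_of_mem_nonunits h
  exact hu ⟨m, hm⟩ hum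

theorem exists_isUnit_add_mul_of_span_pair_eq_top {R : Type*} [CommRing R]
    [Finite (MaximalSpectrum R)] {a b : R} (h : Ideal.span {a, b} = ⊤) :
    ∃ s : R, IsUnit (a + s * b) := by
  classical
  obtain ⟨s, hs⟩ := MaximalSpectrum.exists_forall_sub_mem_asIdeal
    fun m => if a ∈ m.asIdeal then 1 else 0
  refine ⟨s, isUnit_of_forall_notMem_maximalSpectrum fun m hm => ?_⟩
  have hsm := hs m
  by_cases ham : a ∈ m.asIdeal
  · rw [if_pos ham] at hsm
    have hbm : b ∈ m.asIdeal := by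
      have : b = a + s * b - a - (s - 1) * b := by ring
      rw [this]
      exact sub_mem (sub_mem hm ham) (m.asIdeal.mul_mem_right b hsm)
    exact (MaximalSpectrum.notMem_or_notMem_of_span_pair_eq_top h m).elim (· ham) (· hbm)
  · rw [if_neg ham, sub_zero] at hsm
    exact ham (by simpa using sub_mem hm (m.asIdeal.mul_mem_right b hsm))

theorem stmt18 {R : Type*} [CommRing R] [IsArtinianRing R]
    (a b : R) (h : Ideal.span {a, b} = ⊤) :
    ∃ s : R, IsUnit (a + s * b) :=
  exists_isUnit_add_mul_of_span_pair_eq_top h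
end
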